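/- For every integer L ≥ 4, the number of primitive conjugacy classes in the free group F_2 = ⟨a, b⟩ represented by cyclically reduced words of length L that correspond to simple closed curves on the once-punctured torus equals 4·φ(L), where φ is Euler's totient function. -/

import Mathlib

/-- The sum of `s` cyclically consecutive entries of the list `l`, starting at index `i`. -/
def cycSumL (l : List ℕ) (i s : ℕ) : ℕ :=
  ∑ j ∈ Finset.range s, l.getD ((i + j) % l.length) 0

/-- Small variation for a cyclic sequence of integers. -/
def SmallVarL (l : List ℕ) : Prop :=
  ∀ s : ℕ, 1 ≤ s → ∀ i₁ i₂ : ℕ, |(cycSumL l i₁ s : ℤ) - (cycSumL l i₂ s : ℤ)| ≤ 1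

/-- Letters of the free group `F₂ = ⟨a, b⟩`: a generator (`Fin 2`) together with a sign;
`a = (0, false)`, `b = (1, false)`, and the inverse of `(g, s)` is `(g, !s)`. -/
abbrev F2Letter : Type := Fin 2 × Bool

/-- The cyclically reduced word `a^{n_1} b ⋯ a^{n_r} b` associated to the exponent list
`[n_1, …, n_r]`, transformed by the renaming of the generators determined by a permutation
`σ` of the two generators and inversions `t` (so `a ↦ σ(a)^{±1}`, `b ↦ σ(b)^{±1}`). -/
def gtWord (σ : Equiv.Perm (Fin 2)) (t : Fin 2 → Bool) (ns : List ℕ) : List F2Letter :=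
  ((ns.map fun n =>
      List.replicate n ((0 : Fin 2), false) ++ [((1 : Fin 2), false)]).flatten).map
    fun p => (σ p.1, xor (t p.1) p.2)

/-- Christoffel-like canonical list of length `r`, sum `s` (when `r ∣ ·` etc). -/
def chr (r s : ℕ) : List ℕ := (List.range r).map fun i => ((i+1)*s)/r - (i*s)/r

lemma cycSumL_zero (l : List ℕ) (i : ℕ) : cycSumL l i 0 = 0 := by
  simp [cycSumL]

lemma cycSumL_succ (l : List ℕ) (i k : ℕ) :
    cycSumL l i (k+1) = cycSumL l i k + l.getD ((i + k) % l.length) 0 := by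
  simp [cycSumL, Finset.sum_range_succ]

lemma cycSumL_mod (l : List ℕ) (i k : ℕ) : cycSumL l i k = cycSumL l (i % l.length) k := by
  unfold cycSumL
  refine Finset.sum_congr rfl fun j _ => ?_
  rw [Nat.mod_add_mod]

lemma sum_eq_sum_getD (l : List ℕ) : l.sum = ∑ i ∈ Finset.range l.length, l.getD i 0 := by
  induction l with
  | nil => simp
  | cons a l ih =>
    rw [List.sum_cons, List.length_cons, Finset.sum_range_succ']
    simp [ih, Nat.add_comm]

/-- sum of any `l.length` cyclically-consecutive entries is `l.sum`. -/
lemma cycSumL_full (l : List ℕ) (j : ℕ) : cycSumL l j l.length = l.sum := by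
  induction j with
  | zero =>
    rw [cycSumL, sum_eq_sum_getD]
    refine Finset.sum_congr rfl fun i hi => ?_
    rw [Finset.mem_range] at hi
    rw [Nat.zero_add, Nat.mod_eq_of_lt hi]
  | succ j ih =>
    rcases Nat.eq_zero_or_pos l.length with h0 | hpos
    · rw [cycSumL, h0]; rw [cycSumL, h0] at ih; exact ih
    · obtain ⟨r, hr⟩ : ∃ r, l.length = r + 1 := ⟨l.length - 1, by omega⟩
      rw [cycSumL, hr] at ih ⊢
      rw [Finset.sum_range_succ]
      rw [Finset.sum_range_succ'] at ih
      have h3 : (j+1+r) % (r+1) = (j+0) % (r+1) := by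
        have he : j + 1 + r = j + 0 + (r + 1) := by omega
        rw [he, Nat.add_mod_right]
      have h4 : ∑ i ∈ Finset.range r, l.getD ((j + (i+1)) % (r+1)) 0
          = ∑ i ∈ Finset.range r, l.getD ((j+1+i) % (r+1)) 0 :=
        Finset.sum_congr rfl fun i _ => by congr 2; omega
      rw [h4] at ih
      rw [h3]
      omega

lemma cycSumL_add (l : List ℕ) (i k : ℕ) :
    cycSumL l 0 (i + k) = cycSumL l 0 i + cycSumL l i k := by
  induction k with
  | zero => simp [cycSumL_zero]
  | succ k ih =>
    rw [← Nat.add_assoc, cycSumL_succ, cycSumL_succ, ih]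
    simp [Nat.zero_add, Nat.add_assoc]

lemma sum_cycSumL (l : List ℕ) (k : ℕ) :
    ∑ i ∈ Finset.range l.length, cycSumL l i k = k * l.sum := by
  induction k with
  | zero => simp [cycSumL_zero]
  | succ k ih =>
    have : ∀ i, cycSumL l i (k+1) = cycSumL l i k + l.getD ((i+k) % l.length) 0 :=
      fun i => cycSumL_succ l i k
    simp only [this, Finset.sum_add_distrib, ih]
    have h2 : ∑ i ∈ Finset.range l.length, l.getD ((i+k) % l.length) 0 = l.sum := by
      have := cycSumL_full l k
      rw [cycSumL] at this
      rw [← this]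
      refine Finset.sum_congr rfl fun i _ => ?_
      rw [Nat.add_comm i k]
    rw [h2]; ring

lemma smallvar_bounds {l : List ℕ} (hsv : SmallVarL l) (hpos : 0 < l.length)
    {k : ℕ} (hk : 1 ≤ k) (i : ℕ) :
    k * l.sum / l.length ≤ cycSumL l i k ∧ cycSumL l i k ≤ k * l.sum / l.length + 1 := by
  obtain ⟨im, him, hmin⟩ := Finset.exists_min_image (Finset.range l.length)
    (fun i => cycSumL l i k) ⟨0, Finset.mem_range.2 hpos⟩
  set m := cycSumL l im k with hm
  have hgen : ∀ j, m ≤ cycSumL l j k := by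
    intro j
    rw [cycSumL_mod]
    exact hmin _ (Finset.mem_range.2 (Nat.mod_lt _ hpos))
  have hub : ∀ j, cycSumL l j k ≤ m + 1 := by
    intro j
    have h1 := hsv k hk j im
    have h2 := hgen j
    rw [abs_le] at h1
    omega
  have hsum := sum_cycSumL l k
  have hmlow : m * l.length ≤ k * l.sum := by
    rw [← hsum]
    have := Finset.card_nsmul_le_sum (Finset.range l.length) (fun i => cycSumL l i k) m
      (fun i _ => hgen i)
    simpa [Finset.card_range, mul_comm] using this
  have h1 : m ≤ k * l.sum / l.length := (Nat.le_div_iff_mul_le hpos).2 hmlow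
  have h2 : k * l.sum / l.length ≤ m := by
    by_contra hcon
    push_neg at hcon
    have hge : (m + 1) * l.length ≤ k * l.sum := by
      rw [← Nat.le_div_iff_mul_le hpos]
      omega
    have hlt : ∑ i ∈ Finset.range l.length, cycSumL l i k
        < ∑ _i ∈ Finset.range l.length, (m + 1) := by
      refine Finset.sum_lt_sum (fun i _ => hub i) ⟨im, him, ?_⟩
      omega
    rw [hsum, Finset.sum_const, Finset.card_range, smul_eq_mul] at hlt
    have : l.length * (m+1) = (m+1) * l.length := mul_comm _ _
    omega
  have hmf : m = k * l.sum / l.length := le_antisymm h1 h2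
  exact ⟨hmf ▸ hgen i, hmf ▸ hub i⟩

/-- The potential function whose argmin gives the canonical rotation. -/
def Pfun (l : List ℕ) (j : ℕ) : ℤ := (j : ℤ) * l.sum - l.length * cycSumL l 0 j

lemma Pfun_add_len (l : List ℕ) (j : ℕ) : Pfun l (j + l.length) = Pfun l j := by
  unfold Pfun
  rw [cycSumL_add, cycSumL_full]
  push_cast
  ring

lemma Pfun_mod (l : List ℕ) (hpos : 0 < l.length) (j : ℕ) : Pfun l j = Pfun l (j % l.length) := by
  have key : ∀ t m, Pfun l (m + l.length * t) = Pfun l m := by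
    intro t
    induction t with
    | zero => simp
    | succ t ih =>
      intro m
      have : m + l.length * (t+1) = (m + l.length * t) + l.length := by ring
      rw [this, Pfun_add_len, ih]
  conv_lhs => rw [← Nat.mod_add_div j l.length]
  exact key _ _

lemma exists_min_rot (l : List ℕ) (hpos : 0 < l.length) :
    ∃ i₀ < l.length, ∀ j, Pfun l i₀ ≤ Pfun l j := by
  obtain ⟨i₀, hi₀, hmin⟩ := Finset.exists_min_image (Finset.range l.length) (Pfun l)
    ⟨0, Finset.mem_range.2 hpos⟩
  refine ⟨i₀, Finset.mem_range.1 hi₀, fun j => ?_⟩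
  rw [Pfun_mod l hpos j]
  exact hmin _ (Finset.mem_range.2 (Nat.mod_lt _ hpos))

lemma min_rot_cycSum {l : List ℕ} (hsv : SmallVarL l) (hpos : 0 < l.length)
    {i₀ : ℕ} (hmin : ∀ j, Pfun l i₀ ≤ Pfun l j) (k : ℕ) :
    cycSumL l i₀ k = k * l.sum / l.length := by
  rcases Nat.eq_zero_or_pos k with rfl | hk
  · simp [cycSumL_zero]
  have hle : cycSumL l i₀ k ≤ k * l.sum / l.length := by
    have h := hmin (i₀ + k)
    unfold Pfun at h
    rw [cycSumL_add] at h
    rw [Nat.le_div_iff_mul_le hpos]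
    have : (cycSumL l i₀ k * l.length : ℤ) ≤ k * l.sum := by push_cast at h ⊢; nlinarith
    exact_mod_cast this
  exact le_antisymm hle (smallvar_bounds hsv hpos hk i₀).1

lemma chr_length (r s : ℕ) : (chr r s).length = r := by simp [chr]

lemma chr_getD {r m : ℕ} (s : ℕ) (h : m < r) :
    (chr r s).getD m 0 = ((m+1)*s)/r - (m*s)/r := by
  rw [List.getD_eq_getElem _ _ (by simpa [chr_length] using h)]
  simp [chr]

lemma ndiff_mod {r : ℕ} (hr : 0 < r) (s m : ℕ) :
    ((m % r + 1)*s)/r - ((m % r)*s)/r = ((m+1)*s)/r - (m*s)/r := by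
  have e1 : m * s = (m % r) * s + r * ((m / r) * s) := by
    conv_lhs => rw [← Nat.mod_add_div m r]
    ring
  have e2 : (m+1) * s = (m % r + 1) * s + r * ((m / r) * s) := by
    conv_lhs =>
      rw [show m + 1 = (m % r + 1) + r * (m / r) from by
        have h := Nat.mod_add_div m r; omega]
    ring
  have d1 : (m * s) / r = ((m % r) * s) / r + (m / r) * s := by
    rw [e1, Nat.add_mul_div_left _ _ hr]
  have d2 : ((m+1) * s) / r = ((m % r + 1) * s) / r + (m / r) * s := by
    rw [e2, Nat.add_mul_div_left _ _ hr]
  rw [d1, d2]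
  have : (m % r) * s / r ≤ (m % r + 1) * s / r :=
    Nat.div_le_div_right (Nat.mul_le_mul_right _ (by omega))
  omega

lemma chr_sum {r : ℕ} (hr : 0 < r) (s : ℕ) : (chr r s).sum = s := by
  have key : ∀ k, ∑ i ∈ Finset.range k, (((i+1)*s)/r - (i*s)/r) = (k*s)/r := by
    intro k
    induction k with
    | zero => simp
    | succ k ih =>
      rw [Finset.sum_range_succ, ih]
      have h1 : k * s / r ≤ (k+1) * s / r :=
        Nat.div_le_div_right (Nat.mul_le_mul_right _ (by omega))
      have h2 : k * s ≤ (k+1) * s := Nat.mul_le_mul_right _ (by omega)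
      omega
  have h : (chr r s).sum = ∑ i ∈ Finset.range r, (((i+1)*s)/r - (i*s)/r) := by
    rw [sum_eq_sum_getD, chr_length]
    exact Finset.sum_congr rfl fun i hi => chr_getD s (Finset.mem_range.1 hi)
  rw [h, key r, mul_comm, Nat.mul_div_cancel _ hr]

lemma chr_pos {r s m : ℕ} (hrs : r ≤ s) (h : m ∈ chr r s) : 1 ≤ m := by
  rcases Nat.eq_zero_or_pos r with rfl | hr
  · simp [chr] at h
  simp only [chr, List.mem_map, List.mem_range] at h
  obtain ⟨i, _, rfl⟩ := h
  rw [show (i+1)*s = i*s + s by ring]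
  have h1 : (i*s + r) / r ≤ (i*s + s) / r := Nat.div_le_div_right (by omega)
  rw [Nat.add_div_right _ hr] at h1
  omega

lemma cycSumL_chr {r : ℕ} (hr : 0 < r) (s i k : ℕ) :
    cycSumL (chr r s) i k = ((i+k)*s)/r - (i*s)/r := by
  induction k with
  | zero => simp [cycSumL_zero]
  | succ k ih =>
    rw [cycSumL_succ, ih, chr_length]
    rw [chr_getD s (Nat.mod_lt _ hr), ndiff_mod hr]
    have h1 : i*s/r ≤ (i+k)*s/r :=
      Nat.div_le_div_right (Nat.mul_le_mul_right _ (by omega))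
    have h2 : (i+k)*s/r ≤ (i+k+1)*s/r :=
      Nat.div_le_div_right (Nat.mul_le_mul_right _ (by omega))
    have e : i + (k+1) = (i+k)+1 := by omega
    rw [e]
    omega

lemma ndiff_lb {r : ℕ} (hr : 0 < r) (s a k : ℕ) :
    (k*s)/r ≤ ((a+k)*s)/r - (a*s)/r := by
  rw [show (a+k)*s = a*s + k*s by ring, Nat.add_div hr]
  by_cases h : r ≤ a * s % r + k * s % r <;> simp only [h, if_true, if_false] <;> omega

lemma ndiff_ub {r : ℕ} (hr : 0 < r) (s a k : ℕ) :
    ((a+k)*s)/r - (a*s)/r ≤ (k*s)/r + 1 := by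
  rw [show (a+k)*s = a*s + k*s by ring, Nat.add_div hr]
  by_cases h : r ≤ a * s % r + k * s % r
  · simp only [h, if_true]
    rw [Nat.add_assoc, Nat.add_sub_cancel_left]
  · simp only [h, if_false, Nat.add_zero, Nat.add_sub_cancel_left]
    omega

lemma chr_smallVar {r : ℕ} (hr : 0 < r) (s : ℕ) : SmallVarL (chr r s) := by
  intro k _ i₁ i₂
  rw [cycSumL_chr hr, cycSumL_chr hr]
  have b1l := ndiff_lb hr s i₁ k
  have b1u := ndiff_ub hr s i₁ k
  have b2l := ndiff_lb hr s i₂ k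
  have b2u := ndiff_ub hr s i₂ k
  rw [abs_le]
  constructor
  · omega
  · omega

/-- Main uniqueness: any small-variation cyclic sequence is a rotation of `chr`. -/
theorem isRotated_chr {l : List ℕ} (hsv : SmallVarL l) (hpos : 0 < l.length) :
    l.IsRotated (chr l.length l.sum) := by
  obtain ⟨i₀, hi₀, hmin⟩ := exists_min_rot l hpos
  refine ⟨i₀, ?_⟩
  apply List.ext_get
  · simp [chr_length]
  intro j h1 h2
  rw [List.get_rotate]
  have hj : j < l.length := by simpa using h1
  have hget : ∀ (m : ℕ) (hm : m < l.length), l.get ⟨m, hm⟩ = l.getD m 0 :=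
    fun m hm => (List.getD_eq_getElem l 0 hm).symm
  rw [hget]
  have hcs : l.getD ((j + i₀) % l.length) 0 = cycSumL l i₀ (j+1) - cycSumL l i₀ j := by
    have := cycSumL_succ l i₀ j
    rw [Nat.add_comm i₀ j] at this
    omega
  rw [hcs, min_rot_cycSum hsv hpos hmin, min_rot_cycSum hsv hpos hmin]
  have hchr : (chr l.length l.sum).get ⟨j, h2⟩
      = ((j+1)*l.sum)/l.length - (j*l.sum)/l.length := by
    rw [List.get_eq_getElem, ← List.getD_eq_getElem (chr l.length l.sum) 0 h2,
      chr_getD l.sum (by simpa [chr_length] using h2)]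
  rw [hchr]

lemma gtWord_append (σ : Equiv.Perm (Fin 2)) (t : Fin 2 → Bool) (xs ys : List ℕ) :
    gtWord σ t (xs ++ ys) = gtWord σ t xs ++ gtWord σ t ys := by
  simp [gtWord]

lemma gtWord_flatten_replicate (σ : Equiv.Perm (Fin 2)) (t : Fin 2 → Bool) (k : ℕ)
    (u : List ℕ) :
    gtWord σ t ((List.replicate k u).flatten) = (List.replicate k (gtWord σ t u)).flatten := by
  induction k with
  | zero => simp [gtWord]
  | succ k ih => simp [List.replicate_succ, gtWord_append, ih]

lemma gtWord_isRotated {σ : Equiv.Perm (Fin 2)} {t : Fin 2 → Bool} {xs ys : List ℕ}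
    (h : xs.IsRotated ys) : (gtWord σ t xs).IsRotated (gtWord σ t ys) := by
  obtain ⟨n, rfl⟩ := h
  have h1 : gtWord σ t xs
      = gtWord σ t (xs.take (n % xs.length)) ++ gtWord σ t (xs.drop (n % xs.length)) := by
    rw [← gtWord_append, List.take_append_drop]
  have h2 : gtWord σ t (xs.rotate n)
      = gtWord σ t (xs.drop (n % xs.length)) ++ gtWord σ t (xs.take (n % xs.length)) := by
    rw [← gtWord_append, List.rotate_eq_drop_append_take_mod]
  rw [h1, h2]
  exact List.isRotated_append

lemma gtWord_length (σ : Equiv.Perm (Fin 2)) (t : Fin 2 → Bool) (ns : List ℕ) :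
    (gtWord σ t ns).length = ns.sum + ns.length := by
  induction ns with
  | nil => simp [gtWord]
  | cons n ns ih =>
    have : (n :: ns) = [n] ++ ns := rfl
    rw [this, gtWord_append, List.length_append, ih]
    simp [gtWord]
    omega

def baseW (ns : List ℕ) : List F2Letter :=
  (ns.map fun n => List.replicate n ((0 : Fin 2), false) ++ [((1 : Fin 2), false)]).flatten

lemma gtWord_eq_map (σ : Equiv.Perm (Fin 2)) (t : Fin 2 → Bool) (ns : List ℕ) :
    gtWord σ t ns = (baseW ns).map fun p => (σ p.1, xor (t p.1) p.2) := rfl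

/-- Our own letter counter, avoiding `BEq` instance issues. -/
def cnt (x : F2Letter) (l : List F2Letter) : ℕ := l.countP (fun p => decide (p = x))

lemma cnt_perm {l l' : List F2Letter} (h : l.Perm l') (x : F2Letter) : cnt x l = cnt x l' :=
  h.countP_eq _

lemma cnt_append (x : F2Letter) (l l' : List F2Letter) :
    cnt x (l ++ l') = cnt x l + cnt x l' := List.countP_append

lemma cnt_cons (x y : F2Letter) (l : List F2Letter) :
    cnt x (y :: l) = cnt x l + if y = x then 1 else 0 := by
  rw [cnt, List.countP_cons]
  by_cases h : y = x <;> simp [h, cnt]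

lemma cnt_replicate (x y : F2Letter) (n : ℕ) :
    cnt x (List.replicate n y) = if y = x then n else 0 := by
  induction n with
  | zero => simp [cnt]
  | succ n ih =>
    rw [List.replicate_succ, cnt_cons, ih]
    by_cases h : y = x <;> simp [h]

lemma cnt_singleton (x y : F2Letter) : cnt x [y] = if y = x then 1 else 0 := by
  rw [show [y] = List.replicate 1 y from rfl, cnt_replicate]

lemma cnt_nil (x : F2Letter) : cnt x [] = 0 := rfl

lemma baseW_count₀ (ns : List ℕ) : cnt ((0 : Fin 2), false) (baseW ns) = ns.sum := by
  induction ns with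
  | nil => simp [baseW, cnt]
  | cons n ns ih =>
    simp only [baseW, List.map_cons, List.flatten_cons, cnt_append] at ih ⊢
    rw [ih, cnt_replicate, cnt_singleton]
    norm_num

lemma baseW_count₁ (ns : List ℕ) : cnt ((1 : Fin 2), false) (baseW ns) = ns.length := by
  induction ns with
  | nil => simp [baseW, cnt]
  | cons n ns ih =>
    simp only [baseW, List.map_cons, List.flatten_cons, cnt_append] at ih ⊢
    rw [ih, cnt_replicate, cnt_singleton]
    have h1 : ¬ (((0:Fin 2), false) = ((1:Fin 2), false)) := by decide
    simp [h1]
    omega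

lemma baseW_count_true (ns : List ℕ) (g : Fin 2) : cnt (g, true) (baseW ns) = 0 := by
  induction ns with
  | nil => simp [baseW, cnt]
  | cons n ns ih =>
    simp only [baseW, List.map_cons, List.flatten_cons, cnt_append] at ih ⊢
    rw [ih, cnt_replicate, cnt_singleton]
    have h1 : ¬ (((0:Fin 2), false) = (g, true)) := by simp
    have h2 : ¬ (((1:Fin 2), false) = (g, true)) := by simp
    simp [h1, h2]

lemma gtWord_inj (σ : Equiv.Perm (Fin 2)) (t : Fin 2 → Bool) :
    Function.Injective (fun p : F2Letter => ((σ p.1, xor (t p.1) p.2) : F2Letter)) := by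
  rintro ⟨a, x⟩ ⟨c, y⟩ h
  simp only [Prod.mk.injEq] at h
  obtain ⟨h1, h2⟩ := h
  have hac : a = c := σ.injective h1
  subst hac
  have hxy : x = y := by cases t a <;> cases x <;> cases y <;> simp_all
  rw [hxy]

lemma cnt_map_inj (f : F2Letter → F2Letter) (hf : Function.Injective f)
    (l : List F2Letter) (x : F2Letter) : cnt (f x) (l.map f) = cnt x l := by
  induction l with
  | nil => rfl
  | cons a l ih =>
    rw [List.map_cons, cnt_cons, cnt_cons, ih]
    by_cases hax : a = x
    · subst hax; simp
    · have : ¬ f a = f x := fun hc => hax (hf hc)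
      simp [hax, this]

lemma count_gtWord (σ : Equiv.Perm (Fin 2)) (t : Fin 2 → Bool) (ns : List ℕ)
    (i : Fin 2) (b : Bool) :
    cnt (σ i, xor (t i) b) (gtWord σ t ns) = cnt (i, b) (baseW ns) := by
  rw [gtWord_eq_map]
  exact cnt_map_inj _ (gtWord_inj σ t) (baseW ns) (i, b)

lemma count_gtWord₀ (σ : Equiv.Perm (Fin 2)) (t : Fin 2 → Bool) (ns : List ℕ) :
    cnt (σ 0, t 0) (gtWord σ t ns) = ns.sum := by
  have := count_gtWord σ t ns 0 false
  simpa [baseW_count₀] using this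

lemma count_gtWord₁ (σ : Equiv.Perm (Fin 2)) (t : Fin 2 → Bool) (ns : List ℕ) :
    cnt (σ 1, t 1) (gtWord σ t ns) = ns.length := by
  have := count_gtWord σ t ns 1 false
  simpa [baseW_count₁] using this

lemma count_gtWord₀' (σ : Equiv.Perm (Fin 2)) (t : Fin 2 → Bool) (ns : List ℕ) :
    cnt (σ 0, !(t 0)) (gtWord σ t ns) = 0 := by
  have := count_gtWord σ t ns 0 true
  have hx : xor (t 0) true = !(t 0) := by cases t 0 <;> simp
  rw [hx] at this
  simpa [baseW_count_true] using this

lemma count_gtWord₁' (σ : Equiv.Perm (Fin 2)) (t : Fin 2 → Bool) (ns : List ℕ) :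
    cnt (σ 1, !(t 1)) (gtWord σ t ns) = 0 := by
  have := count_gtWord σ t ns 1 true
  have hx : xor (t 1) true = !(t 1) := by cases t 1 <;> simp
  rw [hx] at this
  simpa [baseW_count_true] using this

lemma length_flatten_replicate {α : Type*} (k : ℕ) (u : List α) :
    (List.replicate k u).flatten.length = k * u.length := by
  induction k with
  | zero => simp
  | succ k ih => simp [List.replicate_succ, ih]; ring

lemma count_flatten_replicate (k : ℕ) (u : List F2Letter) (x : F2Letter) :
    cnt x (List.replicate k u).flatten = k * cnt x u := by
  induction k with
  | zero => simp [cnt]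
  | succ k ih =>
    rw [List.replicate_succ, List.flatten_cons, cnt_append, ih]
    ring

lemma getElem_flatten_replicate {α : Type*} (u : List α) (hu : 0 < u.length) (k i : ℕ)
    (h : i < (List.replicate k u).flatten.length) :
    (List.replicate k u).flatten[i] = u[i % u.length]'(Nat.mod_lt _ hu) := by
  induction k generalizing i with
  | zero => simp at h
  | succ k ih =>
    have he : (List.replicate (k+1) u).flatten = u ++ (List.replicate k u).flatten := by
      rw [List.replicate_succ, List.flatten_cons]
    have h' : i < (u ++ (List.replicate k u).flatten).length := he ▸ h
    rw [List.getElem_of_eq he h]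
    by_cases hi : i < u.length
    · rw [List.getElem_append_left hi]
      have hmod : i % u.length = i := Nat.mod_eq_of_lt hi
      simp only [hmod]
    · push_neg at hi
      rw [List.getElem_append_right hi]
      rw [ih (i - u.length) (by simp only [List.length_append] at h'; omega)]
      have hmod : (i - u.length) % u.length = i % u.length := by
        conv_rhs => rw [show i = (i - u.length) + u.length by omega, Nat.add_mod_right]
      simp only [hmod]

lemma chr_power {r s d : ℕ} (hr : 0 < r) (hdr : d ∣ r) (hds : d ∣ s) :
    chr r s = (List.replicate d (chr (r/d) (s/d))).flatten := by
  obtain ⟨r', rfl⟩ := hdr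
  obtain ⟨s', rfl⟩ := hds
  have hd0 : 0 < d := by
    rcases Nat.eq_zero_or_pos d with rfl | h
    · simp at hr
    · exact h
  have hr' : 0 < r' := by
    rcases Nat.eq_zero_or_pos r' with rfl | h
    · simp at hr
    · exact h
  have hcr : d * r' / d = r' := Nat.mul_div_cancel_left _ hd0
  have hcs : d * s' / d = s' := Nat.mul_div_cancel_left _ hd0
  rw [hcr, hcs]
  apply List.ext_getElem
  · rw [chr_length, length_flatten_replicate, chr_length]
  intro i h1 h2
  have hi : i < d * r' := by simpa [chr_length] using h1
  have him : i % r' < r' := Nat.mod_lt _ hr'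
  have hL : (chr (d * r') (d * s'))[i]
      = ((i+1)*(d*s'))/(d*r') - (i*(d*s'))/(d*r') := by
    rw [← List.getD_eq_getElem _ 0 h1, chr_getD _ hi]
  have hR : (List.replicate d (chr r' s')).flatten[i]
      = ((i % r' + 1)*s')/r' - ((i % r')*s')/r' := by
    rw [getElem_flatten_replicate (chr r' s') (by rw [chr_length]; exact hr') d i h2]
    have h3 : i % (chr r' s').length < (chr r' s').length := by
      rw [chr_length]; exact him
    rw [← List.getD_eq_getElem _ 0 h3]
    rw [chr_length]
    exact chr_getD _ him
  rw [hL, hR, ndiff_mod hr' s' i]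
  have e1 : (i+1)*(d*s') = d*((i+1)*s') := by ring
  have e2 : i*(d*s') = d*(i*s') := by ring
  rw [e1, e2, Nat.mul_div_mul_left _ _ hd0, Nat.mul_div_mul_left _ _ hd0]

lemma not_power {w : List F2Letter} {x : F2Letter} {L q : ℕ} (hlen : w.length = L)
    (hcount : cnt x w = q) (hq : 1 ≤ q) (hcop : Nat.Coprime q L) :
    ¬ ∃ (v : List F2Letter) (k : ℕ), 2 ≤ k ∧
        ((List.flatten (List.replicate k v) : List F2Letter) : Cycle F2Letter)
          = (w : Cycle F2Letter) := by
  rintro ⟨v, k, hk, hc⟩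
  rw [Cycle.coe_eq_coe] at hc
  have hperm := hc.perm
  have hlen2 : k * v.length = L := by
    have := hperm.length_eq
    rw [length_flatten_replicate] at this
    omega
  have hcount2 : k * cnt x v = q := by
    have := cnt_perm hperm x
    rw [count_flatten_replicate] at this
    omega
  have hk1 : k ∣ Nat.gcd q L := Nat.dvd_gcd ⟨_, hcount2.symm⟩ ⟨_, hlen2.symm⟩
  rw [hcop] at hk1
  have := Nat.le_of_dvd (by omega) hk1
  omega

lemma perm_fin2 : ∀ σ : Equiv.Perm (Fin 2), σ = 1 ∨ σ = Equiv.swap 0 1 := by decide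

lemma len_le_sum {l : List ℕ} (h : ∀ n ∈ l, 1 ≤ n) : l.length ≤ l.sum := by
  induction l with
  | nil => simp
  | cons a l ih => simp_all; omega

lemma bool_resolve {b c : Bool} (h : ¬ b = c) : b = !c := by
  cases b <;> cases c <;> simp_all

lemma cntA0 (t : Fin 2 → Bool) (ns : List ℕ) (b : Bool) :
    cnt ((0 : Fin 2), b) (gtWord 1 t ns) = if b = t 0 then ns.sum else 0 := by
  by_cases hb : b = t 0
  · subst hb
    have := count_gtWord₀ 1 t ns
    simpa using this
  · rw [if_neg hb, bool_resolve hb]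
    have := count_gtWord₀' 1 t ns
    simpa using this

lemma cntA1 (t : Fin 2 → Bool) (ns : List ℕ) (b : Bool) :
    cnt ((1 : Fin 2), b) (gtWord 1 t ns) = if b = t 1 then ns.length else 0 := by
  by_cases hb : b = t 1
  · subst hb
    have := count_gtWord₁ 1 t ns
    simpa using this
  · rw [if_neg hb, bool_resolve hb]
    have := count_gtWord₁' 1 t ns
    simpa using this

lemma cntB1 (t : Fin 2 → Bool) (ns : List ℕ) (b : Bool) :
    cnt ((1 : Fin 2), b) (gtWord (Equiv.swap 0 1) t ns) = if b = t 0 then ns.sum else 0 := by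
  by_cases hb : b = t 0
  · subst hb
    have := count_gtWord₀ (Equiv.swap 0 1) t ns
    simpa [Equiv.swap_apply_left] using this
  · rw [if_neg hb, bool_resolve hb]
    have := count_gtWord₀' (Equiv.swap 0 1) t ns
    simpa [Equiv.swap_apply_left] using this

lemma cntB0 (t : Fin 2 → Bool) (ns : List ℕ) (b : Bool) :
    cnt ((0 : Fin 2), b) (gtWord (Equiv.swap 0 1) t ns) = if b = t 1 then ns.length else 0 := by
  by_cases hb : b = t 1
  · subst hb
    have := count_gtWord₁ (Equiv.swap 0 1) t ns
    simpa [Equiv.swap_apply_right] using this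
  · rw [if_neg hb, bool_resolve hb]
    have := count_gtWord₁' (Equiv.swap 0 1) t ns
    simpa [Equiv.swap_apply_right] using this

lemma coprime_pos_ne {L q : ℕ} (hL : 4 ≤ L) (hcop : L.Coprime q) : 1 ≤ q ∧ 2*q ≠ L := by
  constructor
  · rcases Nat.eq_zero_or_pos q with rfl | h
    · rw [Nat.coprime_zero_right] at hcop; omega
    · exact h
  · intro he
    have hdvd : q ∣ L := ⟨2, by omega⟩
    have h1 : q ∣ Nat.gcd L q := Nat.dvd_gcd hdvd dvd_rfl
    rw [Nat.Coprime] at hcop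
    rw [hcop] at h1
    have := Nat.le_of_dvd (by omega) h1
    omega

lemma coprime_sub {L q : ℕ} (hcop : L.Coprime q) (hq : q ≤ L) : (L - q).Coprime L := by
  have h1 : Nat.gcd (L - q) L ∣ q := by
    have := Nat.dvd_sub (Nat.gcd_dvd_right (L - q) L) (Nat.gcd_dvd_left (L - q) L)
    rwa [show L - (L - q) = q by omega] at this
  have h2 : Nat.gcd (L - q) L ∣ Nat.gcd L q := Nat.dvd_gcd (Nat.gcd_dvd_right _ _) h1
  rw [Nat.Coprime] at hcop
  rw [hcop] at h2
  exact Nat.eq_one_of_dvd_one h2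

def SetS (L : ℕ) : Set (Cycle F2Letter) :=
  {c : Cycle F2Letter |
      (∃ (σ : Equiv.Perm (Fin 2)) (t : Fin 2 → Bool) (ns : List ℕ),
        ns ≠ [] ∧ (∀ n ∈ ns, 1 ≤ n) ∧ SmallVarL ns ∧
        ns.length + ns.sum = L ∧
        (↑(gtWord σ t ns) : Cycle F2Letter) = c) ∧
      ¬ ∃ (w : List F2Letter) (k : ℕ), 2 ≤ k ∧
          (↑(List.flatten (List.replicate k w)) : Cycle F2Letter) = c}

def fmapC (L : ℕ) (p : (Fin 2 → Bool) × ℕ) : Cycle F2Letter :=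
  if 2 * p.2 < L then (↑(gtWord 1 p.1 (chr p.2 (L - p.2))) : Cycle F2Letter)
  else ↑(gtWord (Equiv.swap 0 1) p.1 (chr (L - p.2) p.2))

lemma memS_A {L q : ℕ} (t : Fin 2 → Bool) (h1 : 1 ≤ q) (h2 : 2*q < L) (hcop : L.Coprime q) :
    (↑(gtWord 1 t (chr q (L - q))) : Cycle F2Letter) ∈ SetS L := by
  have hq0 : 0 < q := h1
  have hs : q ≤ L - q := by omega
  constructor
  · refine ⟨1, t, chr q (L - q), ?_, fun n hn => chr_pos hs hn, chr_smallVar hq0 _, ?_, rfl⟩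
    · rw [← List.length_pos_iff, chr_length]; omega
    · rw [chr_length, chr_sum hq0]; omega
  · apply not_power (x := ((1:Fin 2), t 1)) (L := L) (q := q)
    · rw [gtWord_length, chr_length, chr_sum hq0]; omega
    · have := count_gtWord₁ 1 t (chr q (L - q))
      simpa [chr_length] using this
    · exact h1
    · exact hcop.symm

lemma memS_B {L q : ℕ} (t : Fin 2 → Bool) (hqL : q < L) (h2 : L < 2*q) (hcop : L.Coprime q) :
    (↑(gtWord (Equiv.swap 0 1) t (chr (L - q) q)) : Cycle F2Letter) ∈ SetS L := by
  have hr0 : 0 < L - q := by omega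
  have hs : L - q ≤ q := by omega
  constructor
  · refine ⟨Equiv.swap 0 1, t, chr (L - q) q, ?_, fun n hn => chr_pos hs hn,
      chr_smallVar hr0 _, ?_, rfl⟩
    · rw [← List.length_pos_iff, chr_length]; omega
    · rw [chr_length, chr_sum hr0]; omega
  · apply not_power (x := (((Equiv.swap 0 1 : Equiv.Perm (Fin 2)) 1), t 1)) (L := L) (q := L - q)
    · rw [gtWord_length, chr_length, chr_sum hr0]; omega
    · have := count_gtWord₁ (Equiv.swap 0 1) t (chr (L - q) q)
      simpa [chr_length] using this
    · omega
    · exact coprime_sub hcop (by omega)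

lemma S_subset {L : ℕ} (hL : 4 ≤ L) {c : Cycle F2Letter} (hc : c ∈ SetS L) :
    ∃ t : Fin 2 → Bool, ∃ q : ℕ, q < L ∧ L.Coprime q ∧ fmapC L (t, q) = c := by
  obtain ⟨⟨σ, t, ns, hne, hpos, hsv, hlen, hcoe⟩, hprim⟩ := hc
  have hr : 0 < ns.length := List.length_pos_iff.2 hne
  have hrot := isRotated_chr hsv hr
  have hcoe2 : (↑(gtWord σ t (chr ns.length ns.sum)) : Cycle F2Letter) = c := by
    rw [← hcoe]
    exact (Cycle.coe_eq_coe.2 (gtWord_isRotated hrot)).symm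
  have hrs : ns.length ≤ ns.sum := len_le_sum hpos
  have hgcd : Nat.gcd ns.length ns.sum = 1 := by
    by_contra hg
    have hg0 : 0 < Nat.gcd ns.length ns.sum := Nat.gcd_pos_of_pos_left _ hr
    have hg2 : 2 ≤ Nat.gcd ns.length ns.sum := by omega
    have hpow := chr_power hr (Nat.gcd_dvd_left ns.length ns.sum)
      (Nat.gcd_dvd_right ns.length ns.sum)
    apply hprim
    refine ⟨gtWord σ t (chr (ns.length / Nat.gcd ns.length ns.sum)
      (ns.sum / Nat.gcd ns.length ns.sum)), Nat.gcd ns.length ns.sum, hg2, ?_⟩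
    rw [← gtWord_flatten_replicate, ← hpow, hcoe2]
  have hne' : ns.length ≠ ns.sum := by
    intro he
    rw [he, Nat.gcd_self] at hgcd
    omega
  have hlt : ns.length < ns.sum := lt_of_le_of_ne hrs hne'
  rcases perm_fin2 σ with rfl | rfl
  · refine ⟨t, ns.length, by omega, ?_, ?_⟩
    · have hg : Nat.gcd L ns.length = Nat.gcd ns.sum ns.length := by
        rw [show L = ns.sum + ns.length by omega, Nat.gcd_add_self_left]
      rw [Nat.Coprime, hg, Nat.gcd_comm]
      exact hgcd
    · rw [fmapC]
      simp only
      rw [if_pos (by omega : 2*ns.length < L), show L - ns.length = ns.sum by omega]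
      exact hcoe2
  · refine ⟨t, ns.sum, by omega, ?_, ?_⟩
    · have hg : Nat.gcd L ns.sum = Nat.gcd ns.length ns.sum := by
        rw [show L = ns.length + ns.sum by omega, Nat.gcd_add_self_left]
      rw [Nat.Coprime, hg]
      exact hgcd
    · rw [fmapC]
      simp only
      rw [if_neg (by omega : ¬ 2*ns.sum < L), show L - ns.sum = ns.length by omega]
      exact hcoe2

lemma fmap_injOn {L : ℕ} (hL : 4 ≤ L) {t t' : Fin 2 → Bool} {q q' : ℕ}
    (hq : q < L) (hcop : L.Coprime q) (hq' : q' < L) (hcop' : L.Coprime q')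
    (heq : fmapC L (t, q) = fmapC L (t', q')) : t = t' ∧ q = q' := by
  obtain ⟨hq1, hqne⟩ := coprime_pos_ne hL hcop
  obtain ⟨hq1', hqne'⟩ := coprime_pos_ne hL hcop'
  rw [fmapC, fmapC] at heq
  simp only at heq
  by_cases hA : 2*q < L <;> by_cases hA' : 2*q' < L
  · -- A A
    rw [if_pos hA, if_pos hA'] at heq
    have hcnt : ∀ x, cnt x (gtWord 1 t (chr q (L - q)))
        = cnt x (gtWord 1 t' (chr q' (L - q'))) :=
      fun x => cnt_perm (Cycle.coe_eq_coe.1 heq).perm x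
    have e1 : ∀ b, (if b = t 1 then q else 0) = (if b = t' 1 then q' else 0) := by
      intro b
      have h1 := cntA1 t (chr q (L - q)) b
      have h2 := cntA1 t' (chr q' (L - q')) b
      rw [chr_length] at h1 h2
      rw [← h1, ← h2]
      exact hcnt _
    have e0 : ∀ b, (if b = t 0 then L - q else 0) = (if b = t' 0 then L - q' else 0) := by
      intro b
      have h1 := cntA0 t (chr q (L - q)) b
      have h2 := cntA0 t' (chr q' (L - q')) b
      rw [chr_sum (by omega : 0 < q)] at h1
      rw [chr_sum (by omega : 0 < q')] at h2
      rw [← h1, ← h2]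
      exact hcnt _
    have ht1 : t 1 = t' 1 := by
      by_contra hb
      have := e1 (t 1)
      rw [if_pos rfl, if_neg hb] at this
      omega
    have hqq : q = q' := by
      have := e1 (t 1)
      rw [if_pos rfl, if_pos ht1] at this
      omega
    have ht0 : t 0 = t' 0 := by
      by_contra hb
      have := e0 (t 0)
      rw [if_pos rfl, if_neg hb] at this
      omega
    refine ⟨funext fun i => ?_, hqq⟩
    fin_cases i <;> assumption
  · -- A B
    exfalso
    rw [if_pos hA, if_neg hA'] at heq
    have hcnt : ∀ x, cnt x (gtWord 1 t (chr q (L - q)))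
        = cnt x (gtWord (Equiv.swap 0 1) t' (chr (L - q') q')) :=
      fun x => cnt_perm (Cycle.coe_eq_coe.1 heq).perm x
    have h1 := cntA0 t (chr q (L - q)) (t 0)
    have h2 := cntB0 t' (chr (L - q') q') (t 0)
    rw [chr_sum (by omega : 0 < q)] at h1
    rw [chr_length] at h2
    rw [hcnt _, h2] at h1
    rw [if_pos rfl] at h1
    by_cases hb : t 0 = t' 1
    · rw [if_pos hb] at h1; omega
    · rw [if_neg hb] at h1; omega
  · -- B A
    exfalso
    rw [if_neg hA, if_pos hA'] at heq
    have hcnt : ∀ x, cnt x (gtWord (Equiv.swap 0 1) t (chr (L - q) q))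
        = cnt x (gtWord 1 t' (chr q' (L - q'))) :=
      fun x => cnt_perm (Cycle.coe_eq_coe.1 heq).perm x
    have h1 := cntB0 t (chr (L - q) q) (t' 0)
    have h2 := cntA0 t' (chr q' (L - q')) (t' 0)
    rw [chr_length] at h1
    rw [chr_sum (by omega : 0 < q')] at h2
    rw [hcnt _, h2] at h1
    rw [if_pos rfl] at h1
    by_cases hb : t' 0 = t 1
    · rw [if_pos hb] at h1; omega
    · rw [if_neg hb] at h1; omega
  · -- B B
    rw [if_neg hA, if_neg hA'] at heq
    have hcnt : ∀ x, cnt x (gtWord (Equiv.swap 0 1) t (chr (L - q) q))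
        = cnt x (gtWord (Equiv.swap 0 1) t' (chr (L - q') q')) :=
      fun x => cnt_perm (Cycle.coe_eq_coe.1 heq).perm x
    have e1 : ∀ b, (if b = t 0 then q else 0) = (if b = t' 0 then q' else 0) := by
      intro b
      have h1 := cntB1 t (chr (L - q) q) b
      have h2 := cntB1 t' (chr (L - q') q') b
      rw [chr_sum (by omega : 0 < L - q)] at h1
      rw [chr_sum (by omega : 0 < L - q')] at h2
      rw [← h1, ← h2]
      exact hcnt _
    have e0 : ∀ b, (if b = t 1 then L - q else 0) = (if b = t' 1 then L - q' else 0) := by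
      intro b
      have h1 := cntB0 t (chr (L - q) q) b
      have h2 := cntB0 t' (chr (L - q') q') b
      rw [chr_length] at h1 h2
      rw [← h1, ← h2]
      exact hcnt _
    have ht0 : t 0 = t' 0 := by
      by_contra hb
      have := e1 (t 0)
      rw [if_pos rfl, if_neg hb] at this
      omega
    have hqq : q = q' := by
      have := e1 (t 0)
      rw [if_pos rfl, if_pos ht0] at this
      omega
    have ht1 : t 1 = t' 1 := by
      by_contra hb
      have := e0 (t 1)
      rw [if_pos rfl, if_neg hb] at this
      omega
    refine ⟨funext fun i => ?_, hqq⟩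
    fin_cases i <;> assumption


/-- By the Buser–Semmler classification, for `L ≥ 4` the primitive conjugacy classes in
`F₂` of cyclically reduced word length `L` corresponding to simple closed curves on the
once-punctured torus — i.e. the cyclic words obtained, up to the 8 renamings of the
generators, from `a b^{n_1} ⋯ a b^{n_r}` with primitive exponent necklace of small
variation and `r + ∑ n_i = L` — number exactly `4 φ(L)`. -/
theorem stmt18 (L : ℕ) (hL : 4 ≤ L) :
    {c : Cycle F2Letter |
        (∃ (σ : Equiv.Perm (Fin 2)) (t : Fin 2 → Bool) (ns : List ℕ),
          ns ≠ [] ∧ (∀ n ∈ ns, 1 ≤ n) ∧ SmallVarL ns ∧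
          ns.length + ns.sum = L ∧
          (↑(gtWord σ t ns) : Cycle F2Letter) = c) ∧
        ¬ ∃ (w : List F2Letter) (k : ℕ), 2 ≤ k ∧
            (↑(List.flatten (List.replicate k w)) : Cycle F2Letter) = c}.ncard
      = 4 * Nat.totient L := by
  classical
  show (SetS L).ncard = 4 * Nat.totient L
  have himg : SetS L
      = fmapC L '' ↑((Finset.univ : Finset (Fin 2 → Bool)) ×ˢ
          (Finset.range L).filter L.Coprime) := by
    apply Set.eq_of_subset_of_subset
    · intro c hc
      obtain ⟨t, q, hq, hcop, he⟩ := S_subset hL hc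
      refine ⟨(t, q), ?_, he⟩
      simp only [Finset.coe_product, Set.mem_prod, Finset.mem_coe, Finset.mem_univ,
        Finset.mem_filter, Finset.mem_range, true_and]
      exact ⟨hq, hcop⟩
    · rintro c ⟨⟨t, q⟩, hmem, rfl⟩
      simp only [Finset.coe_product, Set.mem_prod, Finset.mem_coe, Finset.mem_univ,
        Finset.mem_filter, Finset.mem_range, true_and] at hmem
      obtain ⟨hq, hcop⟩ := hmem
      obtain ⟨h1, h2⟩ := coprime_pos_ne hL hcop
      by_cases hA : 2*q < L
      · rw [fmapC]
        simp only
        rw [if_pos hA]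
        exact memS_A t h1 hA hcop
      · rw [fmapC]
        simp only
        rw [if_neg hA]
        exact memS_B t hq (by omega) hcop
  rw [himg]
  have hinj : Set.InjOn (fmapC L) ↑((Finset.univ : Finset (Fin 2 → Bool)) ×ˢ
      (Finset.range L).filter L.Coprime) := by
    rintro ⟨t, q⟩ hm ⟨t', q'⟩ hm' heq
    simp only [Finset.coe_product, Set.mem_prod, Finset.mem_coe, Finset.mem_univ,
      Finset.mem_filter, Finset.mem_range, true_and] at hm hm'
    obtain ⟨ht, hqq⟩ := fmap_injOn hL hm.1 hm.2 hm'.1 hm'.2 heq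
    rw [ht, hqq]
  rw [Set.ncard_image_of_injOn hinj, Set.ncard_coe_finset, Finset.card_product,
    Finset.card_univ]
  have htot : Nat.totient L = ((Finset.range L).filter L.Coprime).card := rfl
  rw [htot]
  congr 1
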